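/- Let 0 ≤ q ≤ p ≤ 1 and ε, δ, δ' > 0. Let G be a weighted bipartite graph on finite nonempty sets X and Y, let X̃ ⊆ X and Ỹ ⊆ Y satisfy |X̃| ≥ (1−δ)|X| and |Ỹ| ≥ (1−δ)|Y|, and let G̃ be a weighted bipartite graph on X̃ × Ỹ with G(x,y) ≥ (1−δ') G̃(x,y) for all x ∈ X̃, y ∈ Ỹ. If (X̃, Ỹ)_{G̃} satisfies DISC_≥(q, p, ε) (with averages normalized over X̃ and Ỹ), then (X, Y)_G satisfies DISC_≥(q, p, ε + 2δ + δ'). -/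
import Mathlib

lemma sum2_lb {X Y : Type*} (s : Finset X) (t : Finset Y) (f : X → Y → ℝ) (c : ℝ)
    (h : ∀ x ∈ s, ∀ y ∈ t, c ≤ f x y) :
    (s.card : ℝ) * (t.card : ℝ) * c ≤ ∑ x ∈ s, ∑ y ∈ t, f x y := by
  calc (s.card : ℝ) * (t.card : ℝ) * c = ∑ _x ∈ s, (t.card : ℝ) * c := by
        rw [Finset.sum_const, nsmul_eq_mul]; ring
    _ ≤ ∑ x ∈ s, ∑ y ∈ t, f x y := by
        refine Finset.sum_le_sum fun x hx => ?_
        calc (t.card : ℝ) * c = ∑ _y ∈ t, c := by rw [Finset.sum_const, nsmul_eq_mul]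
          _ ≤ ∑ y ∈ t, f x y := Finset.sum_le_sum fun y hy => h x hx y hy

lemma pointwise_low (q p d g gt uu vv : ℝ) (hq0 : 0 ≤ q) (hqp : q ≤ p)
    (hd : 0 ≤ d) (hl : (1 - d) * gt ≤ g)
    (hu0 : 0 ≤ uu) (hu1 : uu ≤ 1) (hv0 : 0 ≤ vv) (hv1 : vv ≤ 1) :
    (1 - d) * ((gt - q) * uu * vv) - d * p ≤ (g - q) * uu * vv := by
  have huv0 : 0 ≤ uu * vv := mul_nonneg hu0 hv0
  have huv1 : uu * vv ≤ 1 := mul_le_one₀ hu1 hv0 hv1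
  nlinarith [mul_nonneg (sub_nonneg.2 hl) huv0,
    mul_le_mul_of_nonneg_left huv1 (mul_nonneg hd hq0)]

/-- The one-sided discrepancy condition `DISC_≥(q, p, ε)` for a weighted bipartite graph,
between the vertex subsets `A` and `B` (averages normalized over `A` and `B`). -/
def DISCge {V W : Type*} (A : Finset V) (B : Finset W) (H : V → W → ℝ) (q p ε : ℝ) : Prop :=
  ∀ u : V → ℝ, ∀ v : W → ℝ, (∀ x, 0 ≤ u x ∧ u x ≤ 1) → (∀ y, 0 ≤ v y ∧ v y ≤ 1) →
    -(ε * p) ≤ (∑ x ∈ A, ∑ y ∈ B, (H x y - q) * u x * v y) /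
        ((A.card : ℝ) * (B.card : ℝ))

theorem stmt_10 {X Y : Type*} [Fintype X] [Fintype Y] [Nonempty X] [Nonempty Y]
    (q p ε δ δ' : ℝ) (hq0 : 0 ≤ q) (hqp : q ≤ p) (hp1 : p ≤ 1)
    (hε : 0 < ε) (hδ : 0 < δ) (hδ' : 0 < δ')
    (G Gt : X → Y → ℝ)
    (hG01 : ∀ x y, 0 ≤ G x y ∧ G x y ≤ 1) (hGt01 : ∀ x y, 0 ≤ Gt x y ∧ Gt x y ≤ 1)
    (Xt : Finset X) (Yt : Finset Y)
    (hXt : (1 - δ) * (Fintype.card X : ℝ) ≤ Xt.card)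
    (hYt : (1 - δ) * (Fintype.card Y : ℝ) ≤ Yt.card)
    (hlow : ∀ x ∈ Xt, ∀ y ∈ Yt, (1 - δ') * Gt x y ≤ G x y)
    (hdisc : DISCge Xt Yt Gt q p ε) :
    DISCge (Finset.univ : Finset X) (Finset.univ : Finset Y) G q p (ε + 2 * δ + δ') := by
  intro u v hu hv
  classical
  have hp0 : 0 ≤ p := le_trans hq0 hqp
  have hNpos : (0:ℝ) < (Fintype.card X : ℝ) := by exact_mod_cast Fintype.card_pos
  have hMpos : (0:ℝ) < (Fintype.card Y : ℝ) := by exact_mod_cast Fintype.card_pos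
  set N : ℝ := (Fintype.card X : ℝ) with hN
  set M : ℝ := (Fintype.card Y : ℝ) with hM
  set n : ℝ := (Xt.card : ℝ) with hn
  set m : ℝ := (Yt.card : ℝ) with hm
  have hnN : n ≤ N := by rw [hn, hN]; exact_mod_cast Finset.card_le_univ Xt
  have hmM : m ≤ M := by rw [hm, hM]; exact_mod_cast Finset.card_le_univ Yt
  have hn0 : (0:ℝ) ≤ n := Nat.cast_nonneg _
  have hm0 : (0:ℝ) ≤ m := Nat.cast_nonneg _
  have hterm : ∀ x y, -p ≤ (G x y - q) * u x * v y := by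
    intro x y
    obtain ⟨hg0, hg1⟩ := hG01 x y
    obtain ⟨hu0, hu1⟩ := hu x
    obtain ⟨hv0, hv1⟩ := hv y
    nlinarith [mul_nonneg (mul_nonneg hg0 hu0) hv0, mul_nonneg hu0 hv0,
      mul_le_one₀ hu1 hv0 hv1, mul_le_mul_of_nonneg_left (mul_le_one₀ hu1 hv0 hv1) hq0]
  simp only [Finset.card_univ]
  rw [le_div_iff₀ (by positivity : (0:ℝ) < N * M)]
  set T : ℝ := ∑ x, ∑ y, (G x y - q) * u x * v y with hT
  by_cases htriv : 1 ≤ ε + 2 * δ + δ'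
  · have hlb : N * M * (-p) ≤ T := by
      have := sum2_lb (Finset.univ : Finset X) (Finset.univ : Finset Y)
        (fun x y => (G x y - q) * u x * v y) (-p) (fun x _ y _ => hterm x y)
      simpa [Finset.card_univ] using this
    nlinarith [mul_nonneg (mul_nonneg (by linarith : (0:ℝ) ≤ ε + 2 * δ + δ' - 1) hp0)
      (le_of_lt (mul_pos hNpos hMpos))]
  · push_neg at htriv
    have hδ'1 : δ' < 1 := by linarith
    have hδhalf : δ < 1/2 := by linarith
    have hnpos : (0:ℝ) < n := lt_of_lt_of_le (mul_pos (by linarith) hNpos) hXt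
    have hmpos : (0:ℝ) < m := lt_of_lt_of_le (mul_pos (by linarith) hMpos) hYt
    -- complement cards
    have hcX : ((Xtᶜ : Finset X).card : ℝ) = N - n := by
      rw [Finset.card_compl]
      push_cast [Nat.cast_sub (Finset.card_le_univ Xt)]
      rfl
    have hcY : ((Ytᶜ : Finset Y).card : ℝ) = M - m := by
      rw [Finset.card_compl]
      push_cast [Nat.cast_sub (Finset.card_le_univ Yt)]
      rfl
    set A : ℝ := ∑ x ∈ Xt, ∑ y ∈ Yt, (G x y - q) * u x * v y with hA
    set B : ℝ := ∑ x ∈ Xt, ∑ y ∈ Ytᶜ, (G x y - q) * u x * v y with hB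
    set C : ℝ := ∑ x ∈ Xtᶜ, ∑ y, (G x y - q) * u x * v y with hC
    have hdecomp : T = A + B + C := by
      have h1 : ∑ x ∈ Xt, ∑ y, (G x y - q) * u x * v y = A + B := by
        rw [hA, hB, ← Finset.sum_add_distrib]
        exact Finset.sum_congr rfl fun x _ => (Finset.sum_add_sum_compl Yt _).symm
      rw [hT, ← Finset.sum_add_sum_compl Xt (fun x => ∑ y, (G x y - q) * u x * v y), h1]
    have hBlb : n * (M - m) * (-p) ≤ B := by
      have := sum2_lb Xt Ytᶜ (fun x y => (G x y - q) * u x * v y) (-p)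
        (fun x _ y _ => hterm x y)
      rwa [hcY] at this
    have hClb : (N - n) * M * (-p) ≤ C := by
      have := sum2_lb Xtᶜ (Finset.univ : Finset Y) (fun x y => (G x y - q) * u x * v y) (-p)
        (fun x _ y _ => hterm x y)
      rw [hcX] at this
      simpa [Finset.card_univ] using this
    set SA : ℝ := ∑ x ∈ Xt, ∑ y ∈ Yt, (Gt x y - q) * u x * v y with hSA
    have hSAlb : -(ε * p) * (n * m) ≤ SA := by
      have h := hdisc u v hu hv
      rwa [le_div_iff₀ (mul_pos hnpos hmpos)] at h
    have hA1 : ∀ x ∈ Xt, ∀ y ∈ Yt,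
        (1 - δ') * ((Gt x y - q) * u x * v y) - δ' * p ≤ (G x y - q) * u x * v y :=
      fun x hx y hy => pointwise_low q p δ' (G x y) (Gt x y) (u x) (v y) hq0 hqp hδ'.le
        (hlow x hx y hy) (hu x).1 (hu x).2 (hv y).1 (hv y).2
    have hAlb : (1 - δ') * SA - δ' * p * (n * m) ≤ A := by
      have h1 : ∑ x ∈ Xt, ∑ y ∈ Yt, ((1 - δ') * ((Gt x y - q) * u x * v y) - δ' * p) ≤ A :=
        Finset.sum_le_sum fun x hx => Finset.sum_le_sum fun y hy => hA1 x hx y hy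
      have h2 : ∑ x ∈ Xt, ∑ y ∈ Yt, ((1 - δ') * ((Gt x y - q) * u x * v y) - δ' * p)
          = (1 - δ') * SA - δ' * p * (n * m) := by
        simp only [Finset.sum_sub_distrib, ← Finset.mul_sum, Finset.sum_const, nsmul_eq_mul,
          hSA, hn, hm]
        ring
      linarith
    rw [hdecomp]
    clear_value T A B C SA N M n m
    clear hA1 hT hA hB hC hSA hdecomp hdisc hlow hterm hG01 hGt01 hu hv u v G Gt
    have hAlb2 : -((ε + δ') * p) * (n * m) ≤ A := by
      nlinarith [mul_nonneg (by linarith : (0:ℝ) ≤ 1 - δ')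
          (by linarith : (0:ℝ) ≤ SA + ε * p * (n * m)),
        mul_nonneg hδ'.le (mul_nonneg (mul_nonneg hε.le hp0) (mul_nonneg hn0 hm0))]
    have hprod : (1 - δ) * N * ((1 - δ) * M) ≤ n * m :=
      mul_le_mul hXt hYt (mul_nonneg (by linarith) (le_of_lt hMpos)) hn0
    have hNMnm : n * m ≤ N * M := mul_le_mul hnN hmM hm0 (le_of_lt hNpos)
    have h1 : p * (n * m) ≤ p * (N * M) := mul_le_mul_of_nonneg_left hNMnm hp0
    have h2 : p * ((1 - δ) * N * ((1 - δ) * M)) ≤ p * (n * m) :=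
      mul_le_mul_of_nonneg_left hprod hp0
    have h3 : (0:ℝ) ≤ δ * δ * (p * (N * M)) := by positivity
    have h4 : (ε + δ') * (p * (n * m)) ≤ (ε + δ') * (p * (N * M)) :=
      mul_le_mul_of_nonneg_left h1 (by linarith)
    clear hcX hcY hSAlb hAlb hn hm hN hM hXt hYt hprod hNMnm h1 Xt Yt
    nlinarith [h2, h3, h4, hAlb2, hBlb, hClb]
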